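/- Let (u₁, m₁, H̄₁) and (u₂, m₂, H̄₂) be classical solutions of the ergodic MFG system. Then ∫_{T^d} (m₁ − m₂)(g(m₁) − g(m₂)) + (1/2)(m₁ + m₂)|Du₁ − Du₂|² dx = 0. Consequently m₁ = m₂ on T^d, Du₁ = Du₂ at every point where m₁ > 0, and H̄₁ = H̄₂. -/

import Mathlib

open MeasureTheory Set

noncomputable def pd (d : ℕ) (i : Fin d) (f : (Fin d → ℝ) → ℝ) : (Fin d → ℝ) → ℝ :=
  fun x => fderiv ℝ f x (Pi.single i 1)

noncomputable def gradSq (d : ℕ) (u : (Fin d → ℝ) → ℝ) (x : Fin d → ℝ) : ℝ :=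
  ∑ i, pd d i u x ^ 2

noncomputable def divUp (d : ℕ) (m u : (Fin d → ℝ) → ℝ) (x : Fin d → ℝ) : ℝ :=
  ∑ i, pd d i (fun y => m y * pd d i u y) x

/-- `f` is `ℤ^d`-periodic, i.e. a function on the flat torus `T^d`. -/
def ZPer (d : ℕ) (f : (Fin d → ℝ) → ℝ) : Prop :=
  ∀ (x : Fin d → ℝ) (k : Fin d → ℤ), f (x + fun i => (k i : ℝ)) = f x

/-- `f` has finite `α`-Hölder seminorm. -/
def HolderSemi (α : ℝ) {E : Type*} [PseudoMetricSpace E] (f : E → ℝ) : Prop :=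
  ∃ C : ℝ, 0 ≤ C ∧ ∀ x y, |f x - f y| ≤ C * dist x y ^ α

/-- `f` is of class `C^{1,α}`. -/
def C1Hold (d : ℕ) (α : ℝ) (f : (Fin d → ℝ) → ℝ) : Prop :=
  ContDiff ℝ 1 f ∧ ∀ i, HolderSemi α (pd d i f)

/-- `f` is of class `C^{2,α}`. -/
def C2Hold (d : ℕ) (α : ℝ) (f : (Fin d → ℝ) → ℝ) : Prop :=
  ContDiff ℝ 2 f ∧ ∀ i j, HolderSemi α (pd d i (pd d j f))

/-- `f` is locally `α`-Hölder on `s`. -/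
def LocHolderOn (α : ℝ) (f : ℝ → ℝ) (s : Set ℝ) : Prop :=
  ∀ K : Set ℝ, IsCompact K → K ⊆ s →
    ∃ C : ℝ, 0 ≤ C ∧ ∀ x ∈ K, ∀ y ∈ K, |f x - f y| ≤ C * dist x y ^ α

/-- Standing hypotheses on `g`: strictly increasing and continuous on `[0,∞)`,
of class `C^{1,α}` on `(0,∞)`. -/
def Ghyp (α : ℝ) (g : ℝ → ℝ) : Prop :=
  StrictMonoOn g (Ici 0) ∧ ContinuousOn g (Ici 0) ∧
    DifferentiableOn ℝ g (Ioi 0) ∧ LocHolderOn α (deriv g) (Ioi 0)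

/-- Standing hypotheses on `V`: a `C^{1,α}` function on the torus. -/
def Vhyp (d : ℕ) (α : ℝ) (V : (Fin d → ℝ) → ℝ) : Prop :=
  ZPer d V ∧ C1Hold d α V

/-- The oscillation of `V` over the torus. -/
noncomputable def oscV (d : ℕ) (V : (Fin d → ℝ) → ℝ) : ℝ :=
  sSup (V '' Icc (0 : Fin d → ℝ) 1) - sInf (V '' Icc (0 : Fin d → ℝ) 1)

/-- Assumption (A1): `g⁻¹(g(1) − osc V) > 0`, i.e. `g(1) − osc V` is attained by `g` on `(0,∞)`. -/
def A1 (d : ℕ) (g : ℝ → ℝ) (V : (Fin d → ℝ) → ℝ) : Prop :=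
  g 1 - oscV d V ∈ g '' Ioi (0 : ℝ)

/-- Assumption (A2). -/
def A2 (g : ℝ → ℝ) : Prop :=
  ∃ C₁ C₂ β : ℝ, 0 < C₁ ∧ 0 < C₂ ∧
    (∀ z : ℝ, 0 < z → C₁ * z ^ β ≤ deriv g z) ∧
    (∀ z : ℝ, 0 ≤ z → g z ≤ C₂ + z * g z)

/-- A classical solution `(u, m)` of the discounted MFG system
`ε u + |Du|²/2 + V = g(m)`, `ε m − div(m Du) = ε` on `T^d`. -/
structure DiscSol (d : ℕ) (α : ℝ) (g : ℝ → ℝ) (V : (Fin d → ℝ) → ℝ) (ε : ℝ)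
    (u m : (Fin d → ℝ) → ℝ) : Prop where
  per_u : ZPer d u
  per_m : ZPer d m
  reg_u : C2Hold d α u
  reg_m : C1Hold d α m
  m_nonneg : ∀ x, 0 ≤ m x
  hj : ∀ x, ε * u x + (1 / 2) * gradSq d u x + V x = g (m x)
  fp : ∀ x, ε * m x - divUp d m u x = ε

/-- A classical solution `(u, m, H̄)` of the ergodic MFG system
`|Du|²/2 + V = g(m) + H̄`, `−div(m Du) = 0`, `m ≥ 0`, `∫ m = 1` on `T^d`. -/
structure ErgSol (d : ℕ) (α : ℝ) (g : ℝ → ℝ) (V : (Fin d → ℝ) → ℝ)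
    (u m : (Fin d → ℝ) → ℝ) (H : ℝ) : Prop where
  per_u : ZPer d u
  per_m : ZPer d m
  reg_u : C2Hold d α u
  reg_m : C1Hold d α m
  m_nonneg : ∀ x, 0 ≤ m x
  m_mass : (∫ x in Icc (0 : Fin d → ℝ) 1, m x) = 1
  hj : ∀ x, (1 / 2) * gradSq d u x + V x = g (m x) + H
  fp : ∀ x, divUp d m u x = 0

/-!
Lasry–Lions monotonicity argument. Testing the Hamilton–Jacobi equations against `m₁ - m₂` and
the Fokker–Planck equations against `u₁ - u₂`, and integrating by parts over the torus, the
difference of the two systems gives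
`∫ (m₁ - m₂)(g(m₁) - g(m₂)) + ½ (m₁ + m₂)|Du₁ - Du₂|² = (H̄₂ - H̄₁) ∫ (m₁ - m₂) = 0`.
Both summands are pointwise nonnegative (`g` is increasing, `mᵢ ≥ 0`), and the integrand is
continuous and periodic, so it vanishes identically; strict monotonicity of `g` then forces
`m₁ = m₂`, the second summand forces `Du₁ = Du₂` where `m₁ > 0`, and the Hamilton–Jacobi equation
at such a point (one exists since `∫ m₁ = 1`) gives `H̄₁ = H̄₂`.
-/

section PartialDerivative

variable {d : ℕ} {f h : (Fin d → ℝ) → ℝ}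

lemma contDiff_pd {n : ℕ} (hf : ContDiff ℝ (n + 1) f) (i : Fin d) :
    ContDiff ℝ n (pd d i f) := by
  have hDf := hf.fderiv_right (m := n) le_rfl
  exact (ContinuousLinearMap.apply ℝ ℝ (Pi.single i (1 : ℝ))).contDiff.comp hDf

lemma continuous_pd (hf : ContDiff ℝ 1 f) (i : Fin d) : Continuous (pd d i f) :=
  (contDiff_pd (n := 0) hf i).continuous

lemma pd_mul (hf : Differentiable ℝ f) (hh : Differentiable ℝ h) (i : Fin d) (x : Fin d → ℝ) :
    pd d i (fun y => f y * h y) x = pd d i f x * h x + f x * pd d i h x := by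
  simp only [pd, fderiv_fun_mul (hf x) (hh x), add_apply, smul_apply, smul_eq_mul]
  ring

lemma pd_sub (hf : Differentiable ℝ f) (hh : Differentiable ℝ h) (i : Fin d) (x : Fin d → ℝ) :
    pd d i (fun y => f y - h y) x = pd d i f x - pd d i h x := by
  simp only [pd, fderiv_fun_sub (hf x) (hh x), sub_apply]

end PartialDerivative

section Periodic

variable {d : ℕ} {f : (Fin d → ℝ) → ℝ}

lemma ZPer.pd (hf : ZPer d f) (hd : Differentiable ℝ f) (i : Fin d) : ZPer d (pd d i f) := by
  intro x k
  set c : Fin d → ℝ := fun j => (k j : ℝ)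
  have hshift : HasFDerivAt f (fderiv ℝ f (x + c)) x := by
    have := ((hd (x + c)).hasFDerivAt).comp x ((hasFDerivAt_id x).add_const c)
    rwa [show f ∘ (fun y => id y + c) = f from funext fun y => hf y k] at this
  simp only [_root_.pd, hshift.fderiv]

lemma exists_int_add_mem_Icc (x : Fin d → ℝ) :
    ∃ k : Fin d → ℤ, (x + fun i => (k i : ℝ)) ∈ Icc (0 : Fin d → ℝ) 1 := by
  refine ⟨fun i => -⌊x i⌋, fun i => ?_, fun i => ?_⟩ <;>
    simp only [Pi.add_apply, Pi.zero_apply, Pi.one_apply, Int.cast_neg]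
  · linarith [Int.floor_le (x i)]
  · linarith [Int.lt_floor_add_one (x i)]

/-- The divergence theorem on the torus: the boundary terms on opposite faces of the unit cube
cancel by periodicity. -/
lemma integral_sum_pd_eq_zero_of_zper (F : Fin d → (Fin d → ℝ) → ℝ)
    (hF : ∀ i, ContDiff ℝ 1 (F i)) (hper : ∀ i, ZPer d (F i)) :
    ∫ x in Icc (0 : Fin d → ℝ) 1, ∑ i, pd d i (F i) x = 0 := by
  cases d with
  | zero => simp
  | succ n =>
    have hdiv := integral_divergence_of_hasFDerivAt_off_countable' 0 1 zero_le_one F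
      (fun i x => fderiv ℝ (F i) x) ∅ countable_empty (fun i => (hF i).continuous.continuousOn)
      (fun x _ i => ((hF i).differentiable one_ne_zero x).hasFDerivAt)
      ((continuous_finsetSum _ fun i _ => continuous_pd (hF i) i).integrableOn_Icc)
    refine hdiv.trans (Finset.sum_eq_zero fun i _ => sub_eq_zero.2 <|
      setIntegral_congr_fun measurableSet_Icc fun x _ => ?_)
    have hface : (i.insertNth ((0 : Fin (n + 1) → ℝ) i) x
        + fun j => ((Pi.single i 1 : Fin (n + 1) → ℤ) j : ℝ))
          = i.insertNth ((1 : Fin (n + 1) → ℝ) i) x := by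
      funext j
      refine Fin.succAboveCases i ?_ (fun j' => ?_) j <;> simp
    rw [← hface, hper]

lemma ZPer.eq_zero_of_integral_eq_zero (hper : ZPer d f) (hf : Continuous f) (h0 : ∀ x, 0 ≤ f x)
    (hint : ∫ x in Icc (0 : Fin d → ℝ) 1, f x = 0) (x : Fin d → ℝ) : f x = 0 := by
  have hcube : Icc (0 : Fin d → ℝ) 1 ⊆ closure (interior (Icc 0 1)) := by
    rw [← pi_univ_Icc, interior_pi_set finite_univ, closure_pi_set]
    simp [closure_Ioo]
  have hae : f =ᵐ[volume.restrict (Icc 0 1)] 0 :=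
    (setIntegral_eq_zero_iff_of_nonneg_ae (Filter.Eventually.of_forall h0)
      hf.integrableOn_Icc).1 hint
  obtain ⟨k, hk⟩ := exists_int_add_mem_Icc x
  rw [← hper x k]
  exact Measure.eqOn_of_ae_eq hae hf.continuousOn continuousOn_const hcube hk

end Periodic

lemma lasryLions_identity {ι : Type*} [Fintype ι] (a b : ι → ℝ) (m₁ m₂ c : ℝ) :
    (m₁ - m₂) * ((1 / 2) * ∑ i, a i ^ 2 - (1 / 2) * ∑ i, b i ^ 2 - c)
        + (1 / 2) * (m₁ + m₂) * ∑ i, (a i - b i) ^ 2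
      = ∑ i, m₁ * a i * (a i - b i) - ∑ i, m₂ * b i * (a i - b i) - c * (m₁ - m₂) := by
  have hterm : ∀ i, m₁ * a i * (a i - b i) - m₂ * b i * (a i - b i)
      = (m₁ - m₂) * ((1 / 2) * a i ^ 2 - (1 / 2) * b i ^ 2)
        + (1 / 2) * (m₁ + m₂) * (a i - b i) ^ 2 := fun i => by ring
  rw [← Finset.sum_sub_distrib, Finset.sum_congr rfl fun i _ => hterm i,
    Finset.sum_add_distrib, ← Finset.mul_sum, ← Finset.mul_sum, Finset.sum_sub_distrib,
    ← Finset.mul_sum, ← Finset.mul_sum]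
  ring

/-- Integration by parts against a periodic test function `φ`: `∫ m Du · Dφ = -∫ div(m Du) φ`. -/
lemma integral_sum_mul_pd_eq_zero_of_divUp_eq_zero {d : ℕ} {u m φ : (Fin d → ℝ) → ℝ}
    (hu : ContDiff ℝ 2 u) (hm : ContDiff ℝ 1 m) (hφ : ContDiff ℝ 1 φ)
    (hup : ZPer d u) (hmp : ZPer d m) (hφp : ZPer d φ) (hdiv : ∀ x, divUp d m u x = 0) :
    ∫ x in Icc (0 : Fin d → ℝ) 1, ∑ i, m x * pd d i u x * pd d i φ x = 0 := by
  have hDu : ∀ i, ContDiff ℝ 1 (pd d i u) := fun i => contDiff_pd hu i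
  have hflux : ∀ i, ContDiff ℝ 1 (fun y => m y * pd d i u y) := fun i => hm.mul (hDu i)
  have hproduct : ∀ x, ∑ i, pd d i (fun y => m y * pd d i u y * φ y) x
      = ∑ i, m x * pd d i u x * pd d i φ x := fun x => by
    simp only [pd_mul ((hflux _).differentiable one_ne_zero) (hφ.differentiable one_ne_zero),
      Finset.sum_add_distrib, ← Finset.sum_mul]
    rw [show ∑ i, pd d i (fun y => m y * pd d i u y) x = divUp d m u x from rfl, hdiv, zero_mul,
      zero_add]
  rw [← integral_sum_pd_eq_zero_of_zper _ (fun i => (hflux i).mul hφ) fun i x k => by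
    simp only [hmp x k, hφp x k, hup.pd (hu.differentiable two_ne_zero) i x k]]
  exact setIntegral_congr_fun measurableSet_Icc fun x _ => (hproduct x).symm

noncomputable def lasryLionsIntegrand (d : ℕ) (g : ℝ → ℝ) (u₁ m₁ u₂ m₂ : (Fin d → ℝ) → ℝ)
    (x : Fin d → ℝ) : ℝ :=
  (m₁ x - m₂ x) * (g (m₁ x) - g (m₂ x)) +
    (1 / 2) * (m₁ x + m₂ x) * ∑ i, (pd d i u₁ x - pd d i u₂ x) ^ 2

lemma sub_mul_sub_nonneg_of_monotoneOn {g : ℝ → ℝ} {s : Set ℝ} (hg : MonotoneOn g s) {a b : ℝ}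
    (ha : a ∈ s) (hb : b ∈ s) : 0 ≤ (a - b) * (g a - g b) := by
  rw [mul_comm]
  exact (monovaryOn_id_iff.2 hg).sub_mul_sub_nonneg hb ha

lemma StrictMonoOn.eq_of_sub_mul_sub_eq_zero {g : ℝ → ℝ} {s : Set ℝ} (hg : StrictMonoOn g s)
    {a b : ℝ} (ha : a ∈ s) (hb : b ∈ s) (h : (a - b) * (g a - g b) = 0) : a = b := by
  rcases mul_eq_zero.1 h with h | h
  · exact sub_eq_zero.1 h
  · exact hg.injOn ha hb (sub_eq_zero.1 h)

lemma lasryLionsIntegrand_summands_nonneg {d : ℕ} {g : ℝ → ℝ} (hg : MonotoneOn g (Ici 0))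
    {u₁ m₁ u₂ m₂ : (Fin d → ℝ) → ℝ} {x : Fin d → ℝ} (hm₁ : 0 ≤ m₁ x) (hm₂ : 0 ≤ m₂ x) :
    0 ≤ (m₁ x - m₂ x) * (g (m₁ x) - g (m₂ x)) ∧
      0 ≤ (1 / 2) * (m₁ x + m₂ x) * ∑ i, (pd d i u₁ x - pd d i u₂ x) ^ 2 :=
  ⟨sub_mul_sub_nonneg_of_monotoneOn hg hm₁ hm₂,
    mul_nonneg (by positivity) (Finset.sum_nonneg fun i _ => sq_nonneg _)⟩

namespace ErgSol

variable {d : ℕ} {α : ℝ} {g : ℝ → ℝ} {V : (Fin d → ℝ) → ℝ} {u₁ m₁ u₂ m₂ : (Fin d → ℝ) → ℝ}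
  {H₁ H₂ : ℝ}

lemma integral_lasryLionsIntegrand (h1 : ErgSol d α g V u₁ m₁ H₁)
    (h2 : ErgSol d α g V u₂ m₂ H₂) :
    ∫ x in Icc (0 : Fin d → ℝ) 1, lasryLionsIntegrand d g u₁ m₁ u₂ m₂ x = 0 := by
  have hu₁ := h1.reg_u.1
  have hu₂ := h2.reg_u.1
  have hm₁ := h1.reg_m.1
  have hm₂ := h2.reg_m.1
  have hdiff : ∀ i x, pd d i (fun y => u₁ y - u₂ y) x = pd d i u₁ x - pd d i u₂ x :=
    pd_sub (hu₁.differentiable two_ne_zero) (hu₂.differentiable two_ne_zero)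
  have hφp : ZPer d (fun x => u₁ x - u₂ x) := fun x k => by
    simp only [h1.per_u x k, h2.per_u x k]
  have hφ : ContDiff ℝ 1 (fun x => u₁ x - u₂ x) := (hu₁.sub hu₂).of_le one_le_two
  have htest₁ := integral_sum_mul_pd_eq_zero_of_divUp_eq_zero hu₁ hm₁ hφ h1.per_u h1.per_m hφp h1.fp
  have htest₂ := integral_sum_mul_pd_eq_zero_of_divUp_eq_zero hu₂ hm₂ hφ h2.per_u h2.per_m hφp h2.fp
  simp only [hdiff] at htest₁ htest₂
  have hpointwise : ∀ x, lasryLionsIntegrand d g u₁ m₁ u₂ m₂ x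
      = ∑ i, m₁ x * pd d i u₁ x * (pd d i u₁ x - pd d i u₂ x)
        - ∑ i, m₂ x * pd d i u₂ x * (pd d i u₁ x - pd d i u₂ x) - (H₁ - H₂) * (m₁ x - m₂ x) := by
    intro x
    have hg : g (m₁ x) - g (m₂ x)
        = (1 / 2) * gradSq d u₁ x - (1 / 2) * gradSq d u₂ x - (H₁ - H₂) := by
      linarith [h1.hj x, h2.hj x]
    rw [lasryLionsIntegrand, hg, gradSq, gradSq, lasryLions_identity]
  have hcont : ∀ {m u : (Fin d → ℝ) → ℝ}, ContDiff ℝ 1 m → ContDiff ℝ 2 u →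
      Continuous fun x => ∑ i, m x * pd d i u x * (pd d i u₁ x - pd d i u₂ x) :=
    fun hm hu => continuous_finsetSum _ fun i _ =>
      (hm.continuous.mul (continuous_pd (hu.of_le one_le_two) i)).mul
        ((continuous_pd (hu₁.of_le one_le_two) i).sub (continuous_pd (hu₂.of_le one_le_two) i))
  have hmass : IntegrableOn (fun x => (H₁ - H₂) * (m₁ x - m₂ x)) (Icc 0 1) :=
    (continuous_const.mul (hm₁.continuous.fun_sub hm₂.continuous)).integrableOn_Icc
  rw [setIntegral_congr_fun measurableSet_Icc fun x _ => hpointwise x,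
    integral_sub ((hcont hm₁ hu₁).fun_sub (hcont hm₂ hu₂)).integrableOn_Icc hmass,
    integral_sub (hcont hm₁ hu₁).integrableOn_Icc (hcont hm₂ hu₂).integrableOn_Icc,
    integral_const_mul,
    integral_sub hm₁.continuous.integrableOn_Icc hm₂.continuous.integrableOn_Icc,
    htest₁, htest₂, h1.m_mass, h2.m_mass]
  ring

lemma lasryLionsIntegrand_eq_zero (h1 : ErgSol d α g V u₁ m₁ H₁) (h2 : ErgSol d α g V u₂ m₂ H₂)
    (hg : MonotoneOn g (Ici 0)) (hgc : ContinuousOn g (Ici 0)) (x : Fin d → ℝ) :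
    lasryLionsIntegrand d g u₁ m₁ u₂ m₂ x = 0 := by
  have hu₁ := h1.reg_u.1
  have hu₂ := h2.reg_u.1
  have hper : ZPer d (lasryLionsIntegrand d g u₁ m₁ u₂ m₂) := fun x k => by
    simp only [lasryLionsIntegrand, h1.per_m x k, h2.per_m x k,
      h1.per_u.pd (hu₁.differentiable two_ne_zero) _ x k,
      h2.per_u.pd (hu₂.differentiable two_ne_zero) _ x k]
  have hDu₁ := continuous_pd (hu₁.of_le one_le_two)
  have hDu₂ := continuous_pd (hu₂.of_le one_le_two)
  have hm₁ := h1.reg_m.1.continuous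
  have hm₂ := h2.reg_m.1.continuous
  have hgm₁ : Continuous fun x => g (m₁ x) := hgc.comp_continuous hm₁ h1.m_nonneg
  have hgm₂ : Continuous fun x => g (m₂ x) := hgc.comp_continuous hm₂ h2.m_nonneg
  have hcont : Continuous (lasryLionsIntegrand d g u₁ m₁ u₂ m₂) :=
    ((hm₁.fun_sub hm₂).mul (hgm₁.fun_sub hgm₂)).add ((continuous_const.mul (hm₁.fun_add hm₂)).mul
      (continuous_finsetSum _ fun i _ => ((hDu₁ i).fun_sub (hDu₂ i)).pow 2))
  refine hper.eq_zero_of_integral_eq_zero hcont (fun y => ?_) (h1.integral_lasryLionsIntegrand h2) x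
  obtain ⟨hA, hB⟩ := lasryLionsIntegrand_summands_nonneg (u₁ := u₁) (u₂ := u₂) hg
    (h1.m_nonneg y) (h2.m_nonneg y)
  exact add_nonneg hA hB

lemma exists_pos (h : ErgSol d α g V u₁ m₁ H₁) : ∃ x, 0 < m₁ x := by
  by_contra! hle
  have hzero : m₁ = 0 := funext fun x => le_antisymm (hle x) (h.m_nonneg x)
  simpa [hzero] using h.m_mass

end ErgSol

theorem stmt9_general (d : ℕ) (α : ℝ)
    (g : ℝ → ℝ) (V : (Fin d → ℝ) → ℝ) (hg : Ghyp α g)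
    (u₁ m₁ u₂ m₂ : (Fin d → ℝ) → ℝ) (H₁ H₂ : ℝ)
    (h1 : ErgSol d α g V u₁ m₁ H₁) (h2 : ErgSol d α g V u₂ m₂ H₂) :
    (∫ x in Icc (0 : Fin d → ℝ) 1,
        ((m₁ x - m₂ x) * (g (m₁ x) - g (m₂ x)) +
          (1 / 2) * (m₁ x + m₂ x) * ∑ i, (pd d i u₁ x - pd d i u₂ x) ^ 2)) = 0 ∧
    (∀ x, m₁ x = m₂ x) ∧
    (∀ x, 0 < m₁ x → ∀ i, pd d i u₁ x = pd d i u₂ x) ∧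
    H₁ = H₂ := by
  obtain ⟨hg_mono, hg_cont, -, -⟩ := hg
  have hsummands : ∀ x, (m₁ x - m₂ x) * (g (m₁ x) - g (m₂ x)) = 0 ∧
      (1 / 2) * (m₁ x + m₂ x) * ∑ i, (pd d i u₁ x - pd d i u₂ x) ^ 2 = 0 := fun x => by
    obtain ⟨hA, hB⟩ := lasryLionsIntegrand_summands_nonneg (u₁ := u₁) (u₂ := u₂)
      hg_mono.monotoneOn (h1.m_nonneg x) (h2.m_nonneg x)
    exact (add_eq_zero_iff_of_nonneg hA hB).1
      (h1.lasryLionsIntegrand_eq_zero h2 hg_mono.monotoneOn hg_cont x)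
  have hm : ∀ x, m₁ x = m₂ x := fun x =>
    hg_mono.eq_of_sub_mul_sub_eq_zero (h1.m_nonneg x) (h2.m_nonneg x) (hsummands x).1
  have hDu : ∀ x, 0 < m₁ x → ∀ i, pd d i u₁ x = pd d i u₂ x := by
    intro x hx i
    have hsq : ∑ i, (pd d i u₁ x - pd d i u₂ x) ^ 2 = 0 :=
      (mul_eq_zero.1 (hsummands x).2).resolve_left (by linarith [h2.m_nonneg x])
    rw [Finset.sum_eq_zero_iff_of_nonneg fun j _ => sq_nonneg _] at hsq
    exact sub_eq_zero.1 (pow_eq_zero_iff two_ne_zero |>.1 (hsq i (Finset.mem_univ i)))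
  obtain ⟨x, hx⟩ := h1.exists_pos
  have hHJ := h1.hj x
  rw [show gradSq d u₁ x = gradSq d u₂ x from Finset.sum_congr rfl fun i _ => by rw [hDu x hx i],
    hm x] at hHJ
  exact ⟨h1.integral_lasryLionsIntegrand h2, hm, hDu, by linarith [h2.hj x]⟩

theorem stmt9 (d : ℕ) (α : ℝ) (hα0 : 0 < α) (hα1 : α < 1)
    (g : ℝ → ℝ) (V : (Fin d → ℝ) → ℝ) (hg : Ghyp α g) (hV : Vhyp d α V)
    (u₁ m₁ u₂ m₂ : (Fin d → ℝ) → ℝ) (H₁ H₂ : ℝ)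
    (h1 : ErgSol d α g V u₁ m₁ H₁) (h2 : ErgSol d α g V u₂ m₂ H₂) :
    (∫ x in Icc (0 : Fin d → ℝ) 1,
        ((m₁ x - m₂ x) * (g (m₁ x) - g (m₂ x)) +
          (1 / 2) * (m₁ x + m₂ x) * ∑ i, (pd d i u₁ x - pd d i u₂ x) ^ 2)) = 0 ∧
    (∀ x, m₁ x = m₂ x) ∧
    (∀ x, 0 < m₁ x → ∀ i, pd d i u₁ x = pd d i u₂ x) ∧
    H₁ = H₂ :=
  stmt9_general d α g V hg u₁ m₁ u₂ m₂ H₁ H₂ h1 h2
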